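/- Let k ≥ 2 be an integer. If τ is a symmetric polynomial matrix whose entries have total degree at most k and div div τ = 0, then there exists a polynomial vector field v = (v₁, v₂) whose components have total degree at most k+1 such that τ = sym curl v. -/

import Mathlib

/-!
Write `τ = [[a, b], [b, c]]`. The identity `τ = sym curl v` amounts to `∂₂v₁ = a`,
`∂₁v₂ = -c` and `∂₂v₂ - ∂₁v₁ = 2b`. Taking antiderivatives `A` of `a` in `x₂` and `B` of `c`
in `x₁`, the field `v = (A - f, g - B)` works as soon as `∂₂f = 0`, `∂₁g = 0` and
`∂₁f + ∂₂g = w := 2b + ∂₂B + ∂₁A`. Since `∂₁∂₂w = div div τ = 0`, the polynomial `w` has no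
mixed monomials, so `w = p(x₁) + q(x₂)`, and `f`, `g` are antiderivatives of `p`, `q`.
Antidifferentiation raises the degree by at most one.
-/

open MvPolynomial Matrix

/-- Real polynomials in two variables. -/
abbrev P2 := MvPolynomial (Fin 2) ℝ

/-- The matrix `curl v` of a polynomial vector field, defined row-wise:
`(curl v)_{i1} = ∂₂ vᵢ`, `(curl v)_{i2} = -∂₁ vᵢ`. -/
noncomputable def pcurl (v : Fin 2 → P2) : Matrix (Fin 2) (Fin 2) P2 :=
  Matrix.of fun i j =>
    if j = 0 then pderiv (1 : Fin 2) (v i) else -(pderiv (0 : Fin 2) (v i))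

/-- `sym curl v := (curl v + (curl v)ᵀ)/2`. -/
noncomputable def psymCurl (v : Fin 2 → P2) : Matrix (Fin 2) (Fin 2) P2 :=
  (1 / 2 : ℝ) • (pcurl v + (pcurl v)ᵀ)

/-- `div div τ := Σ_{i,j} ∂ᵢ∂ⱼ τ_{ij}`. -/
noncomputable def pdivDiv (τ : Matrix (Fin 2) (Fin 2) P2) : P2 :=
  ∑ i : Fin 2, ∑ j : Fin 2, pderiv i (pderiv j (τ i j))

/-- The matrix `x xᵀ q` with `(i,j)`-entry `Xᵢ · Xⱼ · q`. -/
noncomputable def xxT (q : P2) : Matrix (Fin 2) (Fin 2) P2 :=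
  Matrix.of fun i j => X i * X j * q

/-- The polynomial vector `x^⊥ = (X₂, -X₁)`. -/
noncomputable def xPerp : Fin 2 → P2 := ![X 1, -X 0]

/-- `rot τ`, with components `(rot τ)ᵢ = ∂₁ τ_{i2} - ∂₂ τ_{i1}`. -/
noncomputable def prot (τ : Matrix (Fin 2) (Fin 2) P2) : Fin 2 → P2 :=
  fun i => pderiv (0 : Fin 2) (τ i 1) - pderiv (1 : Fin 2) (τ i 0)

/-- The Hessian matrix `∇²q` with entries `∂ᵢ∂ⱼ q`. -/
noncomputable def phess (q : P2) : Matrix (Fin 2) (Fin 2) P2 :=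
  Matrix.of fun i j => pderiv i (pderiv j q)

/-- `sym(x^⊥ ⊗ v)`, the symmetric matrix with `(i,j)`-entry
`((x^⊥)ᵢ vⱼ + vᵢ (x^⊥)ⱼ)/2`. -/
noncomputable def symTen (v : Fin 2 → P2) : Matrix (Fin 2) (Fin 2) P2 :=
  Matrix.of fun i j => (1 / 2 : ℝ) • (xPerp i * v j + v i * xPerp j)

/-- The gradient matrix `∇v` with entries `(∇v)_{ij} = ∂ⱼ vᵢ`. -/
noncomputable def pgrad (v : Fin 2 → P2) : Matrix (Fin 2) (Fin 2) P2 :=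
  Matrix.of fun i j => pderiv j (v i)

/-- The symmetric gradient `def v := (∇v + (∇v)ᵀ)/2`. -/
noncomputable def pdef (v : Fin 2 → P2) : Matrix (Fin 2) (Fin 2) P2 :=
  (1 / 2 : ℝ) • (pgrad v + (pgrad v)ᵀ)

/-- The matrix `x^⊥ (x^⊥)ᵀ q` with `(i,j)`-entry `(x^⊥)ᵢ (x^⊥)ⱼ q`. -/
noncomputable def xPerpxPerpT (q : P2) : Matrix (Fin 2) (Fin 2) P2 :=
  Matrix.of fun i j => xPerp i * xPerp j * q

/-- `rot rot τ := ∂₁(rot τ)₂ − ∂₂(rot τ)₁`. -/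
noncomputable def protRot (τ : Matrix (Fin 2) (Fin 2) P2) : P2 :=
  pderiv (0 : Fin 2) (prot τ 1) - pderiv (1 : Fin 2) (prot τ 0)

open Finsupp

namespace MvPolynomial

section CommSemiring
variable {σ R : Type*} [CommSemiring R]

theorem pderiv_pderiv_comm (i j : σ) (f : MvPolynomial σ R) :
    pderiv i (pderiv j f) = pderiv j (pderiv i f) := by
  obtain rfl | hij := eq_or_ne i j
  · rfl
  ext m
  simp only [coeff_pderiv, Finsupp.add_apply, single_eq_of_ne hij, single_eq_of_ne hij.symm,
    add_zero, add_right_comm m]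
  ring

theorem totalDegree_pderiv_le (i : σ) (f : MvPolynomial σ R) :
    (pderiv i f).totalDegree ≤ f.totalDegree - 1 := by
  refine Finset.sup_le fun m hm => ?_
  have hf : m + single i 1 ∈ f.support := by
    rw [mem_support_iff, coeff_pderiv] at hm
    exact mem_support_iff.2 (left_ne_zero_of_mul hm)
  have := le_totalDegree hf
  rw [sum_add_index' (fun _ => rfl) (fun _ _ _ => rfl), sum_single_index rfl] at this
  omega

end CommSemiring

section CommRing
variable {σ R : Type*} [CommRing R] [NoZeroDivisors R] [CharZero R]

theorem exists_eq_add_of_pderiv_pderiv_eq_zero {i j : σ} (hij : i ≠ j) {w : MvPolynomial σ R}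
    (hw : pderiv i (pderiv j w) = 0) :
    ∃ p q : MvPolynomial σ R, w = p + q ∧ pderiv j p = 0 ∧ pderiv i q = 0 ∧
      p.totalDegree ≤ w.totalDegree ∧ q.totalDegree ≤ w.totalDegree := by
  classical
  -- the monomials of `w` not involving `X j`
  set p := weightedHomogeneousComponent (Pi.single j 1) 0 w with hp
  have coeff_p (m : σ →₀ ℕ) : coeff m p = if m j = 0 then coeff m w else 0 := by
    rw [hp, coeff_weightedHomogeneousComponent, weight_single_one_apply]
  have hpw : p.totalDegree ≤ w.totalDegree := by
    refine totalDegree_le_of_support_subset ?_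
    rw [hp, support_weightedHomogeneousComponent]
    exact Finset.filter_subset _ _
  refine ⟨p, w - p, (add_sub_cancel p w).symm, ?_, ?_, hpw,
    (totalDegree_sub _ _).trans (max_le le_rfl hpw)⟩
  · ext m
    simp [coeff_pderiv, coeff_p]
  · ext m
    rw [coeff_pderiv, coeff_sub, coeff_p, coeff_zero, Finsupp.add_apply, single_eq_of_ne hij.symm,
      add_zero]
    split_ifs with hm
    · rw [sub_self, zero_mul]
    obtain ⟨m', rfl⟩ : ∃ m', m = m' + single j 1 :=
      ⟨_, (sub_add_single_one_cancel hm).symm⟩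
    -- a monomial divisible by `X i * X j` survives in `∂ᵢ∂ⱼ w` with a nonzero factor
    have h := congrArg (coeff m') hw
    rw [coeff_pderiv, coeff_pderiv, coeff_zero, add_right_comm] at h
    have h' := (mul_eq_zero.1 h).resolve_right (Nat.cast_add_one_ne_zero _)
    rw [sub_zero, (mul_eq_zero.1 h').resolve_right (Nat.cast_add_one_ne_zero _), zero_mul]

end CommRing

section Field
variable {σ K : Type*} [Field K]

noncomputable def antideriv (i : σ) : MvPolynomial σ K →ₗ[K] MvPolynomial σ K :=
  (basisMonomials σ K).constr K fun m => monomial (m + single i 1) (m i + 1 : K)⁻¹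

theorem antideriv_monomial (i : σ) (m : σ →₀ ℕ) (a : K) :
    antideriv i (monomial m a) = monomial (m + single i 1) (a / (m i + 1)) := by
  have hm : monomial m a = a • basisMonomials σ K m := by simp [smul_monomial]
  rw [hm, map_smul, antideriv, Module.Basis.constr_basis, smul_monomial, smul_eq_mul,
    div_eq_mul_inv]

theorem pderiv_antideriv [CharZero K] (i : σ) (p : MvPolynomial σ K) :
    pderiv i (antideriv i p) = p := by
  induction p using MvPolynomial.induction_on' with
  | monomial m a =>
    rw [antideriv_monomial, pderiv_monomial, add_tsub_cancel_right]
    congr 1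
    simp only [Finsupp.add_apply, single_eq_same]
    push_cast
    field_simp
  | add p q hp hq => rw [map_add, map_add, hp, hq]

theorem pderiv_antideriv_of_ne {i j : σ} (hij : i ≠ j) (p : MvPolynomial σ K) :
    pderiv j (antideriv i p) = antideriv i (pderiv j p) := by
  induction p using MvPolynomial.induction_on' with
  | monomial m a =>
    rw [antideriv_monomial, pderiv_monomial, pderiv_monomial, antideriv_monomial]
    have hm : m + single i 1 - single j 1 = m - single j 1 + single i 1 := by
      classical
      ext n
      simp only [Finsupp.add_apply, tsub_apply, Finsupp.single_apply]
      split_ifs <;> grind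
    simp only [hm, Finsupp.add_apply, tsub_apply, single_eq_of_ne hij, single_eq_of_ne hij.symm,
      tsub_zero, add_zero]
    congr 1
    ring
  | add p q hp hq => rw [map_add, map_add, map_add, map_add, hp, hq]

theorem totalDegree_antideriv_le (i : σ) (p : MvPolynomial σ K) :
    (antideriv i p).totalDegree ≤ p.totalDegree + 1 := by
  conv_lhs => rw [p.as_sum, map_sum]
  refine (totalDegree_finsetSum _ _).trans (Finset.sup_le fun m hm => ?_)
  rw [antideriv_monomial]
  refine (totalDegree_monomial_le _ _).trans ?_
  rw [sum_add_index' (fun _ => rfl) (fun _ _ _ => rfl), sum_single_index rfl]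
  exact Nat.add_le_add_right (le_totalDegree hm) 1

theorem exists_pderiv_add_pderiv_eq_of_pderiv_pderiv_eq_zero [CharZero K] {i j : σ} (hij : i ≠ j)
    {w : MvPolynomial σ K} (hw : pderiv i (pderiv j w) = 0) :
    ∃ f g : MvPolynomial σ K, pderiv j f = 0 ∧ pderiv i g = 0 ∧
      pderiv i f + pderiv j g = w ∧
      f.totalDegree ≤ w.totalDegree + 1 ∧ g.totalDegree ≤ w.totalDegree + 1 := by
  obtain ⟨p, q, rfl, hp, hq, hp_deg, hq_deg⟩ := exists_eq_add_of_pderiv_pderiv_eq_zero hij hw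
  refine ⟨antideriv i p, antideriv j q, ?_, ?_, ?_, ?_, ?_⟩
  · rw [pderiv_antideriv_of_ne hij, hp, map_zero]
  · rw [pderiv_antideriv_of_ne hij.symm, hq, map_zero]
  · rw [pderiv_antideriv, pderiv_antideriv]
  · exact (totalDegree_antideriv_le _ _).trans (Nat.add_le_add_right hp_deg 1)
  · exact (totalDegree_antideriv_le _ _).trans (Nat.add_le_add_right hq_deg 1)

end Field
end MvPolynomial

theorem pdivDiv_eq_pderiv_pderiv (τ : Matrix (Fin 2) (Fin 2) P2) :
    pdivDiv τ = pderiv 0 (pderiv 1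
      (τ 0 1 + τ 1 0 + pderiv 1 (antideriv 0 (τ 1 1)) + pderiv 0 (antideriv 1 (τ 0 0)))) := by
  have hA :
      pderiv 0 (pderiv 1 (pderiv 0 (antideriv 1 (τ 0 0)))) = pderiv 0 (pderiv 0 (τ 0 0)) := by
    rw [← pderiv_pderiv_comm 0 1 (antideriv 1 _), pderiv_antideriv]
  have hB :
      pderiv 0 (pderiv 1 (pderiv 1 (antideriv 0 (τ 1 1)))) = pderiv 1 (pderiv 1 (τ 1 1)) := by
    rw [pderiv_pderiv_comm 0 1, pderiv_pderiv_comm 0 1 (antideriv 0 _), pderiv_antideriv]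
  simp only [pdivDiv, Fin.sum_univ_two, map_add, hA, hB, pderiv_pderiv_comm 1 0 (τ 1 0)]
  ring

theorem eq_psymCurl_of_pderiv {τ : Matrix (Fin 2) (Fin 2) P2} (hsym : τᵀ = τ) {v : Fin 2 → P2}
    (h00 : pderiv 1 (v 0) = τ 0 0) (h11 : pderiv 0 (v 1) = -τ 1 1)
    (h01 : pderiv 1 (v 1) - pderiv 0 (v 0) = τ 0 1 + τ 1 0) : τ = psymCurl v := by
  ext i j m
  have e01 := congrArg (coeff m) h01
  have e10 := congrArg (fun M : Matrix (Fin 2) (Fin 2) P2 => coeff m (M 1 0)) hsym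
  simp only [coeff_add, coeff_sub, transpose_apply] at e01 e10
  fin_cases i <;> fin_cases j <;>
    simp only [Fin.zero_eta, Fin.isValue, Fin.mk_one, psymCurl, pcurl, Matrix.smul_apply,
      Matrix.add_apply, of_apply, one_ne_zero, ↓reduceIte, h00, h11, transpose_apply, smul_add,
      smul_neg, coeff_add, coeff_neg, coeff_smul, smul_eq_mul] <;>
    linarith

theorem stmt_5_general (k : ℕ) (τ : Matrix (Fin 2) (Fin 2) P2)
    (hsym : τᵀ = τ) (hdeg : ∀ i j, (τ i j).totalDegree ≤ k)
    (h : pdivDiv τ = 0) :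
    ∃ v : Fin 2 → P2, (∀ i, (v i).totalDegree ≤ k + 1) ∧ τ = psymCurl v := by
  set A := antideriv 1 (τ 0 0)
  set B := antideriv 0 (τ 1 1)
  have hA : A.totalDegree ≤ k + 1 :=
    (totalDegree_antideriv_le _ _).trans (Nat.add_le_add_right (hdeg 0 0) 1)
  have hB : B.totalDegree ≤ k + 1 :=
    (totalDegree_antideriv_le _ _).trans (Nat.add_le_add_right (hdeg 1 1) 1)
  set w := τ 0 1 + τ 1 0 + pderiv 1 B + pderiv 0 A
  have hw : w.totalDegree ≤ k := by
    have := totalDegree_pderiv_le 1 B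
    have := totalDegree_pderiv_le 0 A
    refine (totalDegree_add _ _).trans (max_le ((totalDegree_add _ _).trans
      (max_le ((totalDegree_add _ _).trans (max_le (hdeg 0 1) (hdeg 1 0))) ?_)) ?_) <;> omega
  obtain ⟨f, g, hf, hg, hfg, hf_deg, hg_deg⟩ :=
    exists_pderiv_add_pderiv_eq_of_pderiv_pderiv_eq_zero (w := w) zero_ne_one
      ((pdivDiv_eq_pderiv_pderiv τ).symm.trans h)
  refine ⟨![A - f, g - B], ?_, eq_psymCurl_of_pderiv hsym ?_ ?_ ?_⟩
  · intro i
    fin_cases i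
    · exact (totalDegree_sub _ _).trans (max_le hA (by omega))
    · exact (totalDegree_sub _ _).trans (max_le (by omega) hB)
  · simp [A, hf, pderiv_antideriv]
  · simp [B, hg, pderiv_antideriv]
  · simp only [Matrix.cons_val_zero, Matrix.cons_val_one, map_sub]
    linear_combination hfg

/-- Any symmetric polynomial matrix of degree ≤ k in the kernel of `div div`
is `sym curl` of a polynomial vector field of degree ≤ k+1. -/
theorem stmt_5 (k : ℕ) (hk : 2 ≤ k) (τ : Matrix (Fin 2) (Fin 2) P2)
    (hsym : τᵀ = τ) (hdeg : ∀ i j, (τ i j).totalDegree ≤ k)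
    (h : pdivDiv τ = 0) :
    ∃ v : Fin 2 → P2, (∀ i, (v i).totalDegree ≤ k + 1) ∧ τ = psymCurl v :=
  stmt_5_general k τ hsym hdeg h
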